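/- Lemma (stability of the endemic equilibrium): if R₀ > 1, then every complex eigenvalue of the matrix M = !![−εω(δ+σ)−ω, −αβ/R₀−ω, −β/R₀−ω; εω(δ+σ), −βσ/(γR₀), β/R₀; 0, σ, −γ] (viewed as a matrix over ℂ) has strictly negative real part. -/

import Mathlib

/-!
Routh–Hurwitz for the characteristic cubic `λ³ + aλ² + bλ + c`: all roots lie in the open left
half-plane as soon as `a, c > 0` and `c < a b`. Writing `e = εω(δ + σ)` and
`k = β / (γ R₀) = (δ + σ) / (αγ + σ)`, the Jacobian becomes
`!![-e - ω, -αγk - ω, -γk - ω; e, -σk, γk; 0, σ, -γ]`. For `R₀ > 1` we have `e > 0`, which makes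
`a` and `c` positive, and `a b - c` is `eω(γ + σk - σ)` plus a sum of positive monomials;
finally `γ + σk ≥ σ` because `α ≤ 1` and `δ ≥ 0`.
-/

open Matrix

noncomputable def R0 (β γ δ σ α : ℝ) : ℝ := β * (α * γ + σ) / (γ * (δ + σ))

noncomputable def eps (β γ δ σ ω α : ℝ) : ℝ :=
  (β * (α * γ + σ) - γ * (δ + σ)) / ((δ + σ) * (σ * ω + γ * (δ + σ + ω)))

noncomputable def Mjac (β γ δ σ ω α : ℝ) : Matrix (Fin 3) (Fin 3) ℝ :=
  !![-(eps β γ δ σ ω α) * ω * (δ + σ) - ω, -(α * β) / R0 β γ δ σ α - ω, -β / R0 β γ δ σ α - ω;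
     eps β γ δ σ ω α * ω * (δ + σ), -(β * σ) / (γ * R0 β γ δ σ α), β / R0 β γ δ σ α;
     0, σ, -γ]

theorem re_neg_of_cubic_eq_zero {a b c : ℝ} (ha : 0 < a) (hc : 0 < c) (habc : c < a * b)
    {z : ℂ} (hz : z ^ 3 + a * z ^ 2 + b * z + c = 0) : z.re < 0 := by
  have hb : 0 < b := pos_of_mul_pos_right (hc.trans habc) ha.le
  obtain ⟨x, y⟩ := z
  have hre := congrArg Complex.re hz
  have him := congrArg Complex.im hz
  simp only [pow_succ, pow_zero, one_mul, Complex.add_re, Complex.add_im, Complex.mul_re,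
    Complex.mul_im, Complex.ofReal_re, Complex.ofReal_im, Complex.zero_re, Complex.zero_im,
    sub_zero, zero_mul, add_zero] at hre him
  by_contra! hx
  rcases eq_or_ne y 0 with rfl | hy
  · nlinarith [mul_nonneg (mul_nonneg hx hx) hx, mul_nonneg (mul_nonneg ha.le hx) hx,
      mul_nonneg hb.le hx]
  · -- substituting `y²` into the real part leaves `8x³ + 8ax² + 2(b + a²)x + (ab - c) = 0`
    have hy2 : y ^ 2 = 3 * x ^ 2 + 2 * a * x + b :=
      (mul_left_cancel₀ hy (by linear_combination him)).symm
    nlinarith [mul_nonneg (mul_nonneg hx hx) hx, mul_nonneg (mul_nonneg ha.le hx) hx,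
      mul_nonneg hb.le hx, mul_nonneg (mul_nonneg ha.le ha.le) hx]

namespace Matrix

variable {R : Type*} [CommRing R]

def principalMinorSum (A : Matrix (Fin 3) (Fin 3) R) : R :=
  A 0 0 * A 1 1 - A 0 1 * A 1 0 + A 0 0 * A 2 2 - A 0 2 * A 2 0 + A 1 1 * A 2 2 - A 1 2 * A 2 1

theorem eval_charpoly_fin_three (A : Matrix (Fin 3) (Fin 3) R) (x : R) :
    A.charpoly.eval x = x ^ 3 - A.trace * x ^ 2 + A.principalMinorSum * x - A.det := by
  rw [eval_charpoly, det_fin_three, det_fin_three, trace_fin_three, principalMinorSum]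
  simp [scalar_apply]
  ring

theorem re_neg_of_mem_spectrum_fin_three (A : Matrix (Fin 3) (Fin 3) ℝ) (htr : A.trace < 0)
    (hdet : A.det < 0) (hRH : A.trace * A.principalMinorSum < A.det) :
    ∀ μ ∈ spectrum ℂ (A.map (Complex.ofReal ·)), μ.re < 0 := by
  intro μ hμ
  rw [mem_spectrum_iff_isRoot_charpoly, Polynomial.IsRoot, eval_charpoly_fin_three] at hμ
  have htr' : (A.map (Complex.ofReal ·)).trace = A.trace := by simp [trace_fin_three]
  have hdet' : (A.map (Complex.ofReal ·)).det = A.det := by simp [det_fin_three]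
  have hm : (A.map (Complex.ofReal ·)).principalMinorSum = A.principalMinorSum := by
    simp [principalMinorSum]
  rw [htr', hdet', hm] at hμ
  refine re_neg_of_cubic_eq_zero (b := A.principalMinorSum) (neg_pos.2 htr) (neg_pos.2 hdet)
    (by linarith) ?_
  push_cast
  linear_combination hμ

end Matrix

def seirsJacobian (e ω k α γ σ : ℝ) : Matrix (Fin 3) (Fin 3) ℝ :=
  !![-e - ω, -α * γ * k - ω, -γ * k - ω;
     e, -σ * k, γ * k;
     0, σ, -γ]

section seirsJacobian

variable {e ω k α γ σ : ℝ}

theorem seirsJacobian_trace : (seirsJacobian e ω k α γ σ).trace = -(e + ω + σ * k + γ) := by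
  simp [seirsJacobian, trace_fin_three]
  ring

theorem seirsJacobian_det :
    (seirsJacobian e ω k α γ σ).det = -e * (γ * (α * γ * k + ω) + σ * (γ * k + ω)) := by
  simp [seirsJacobian, det_fin_three]
  ring

theorem seirsJacobian_principalMinorSum :
    (seirsJacobian e ω k α γ σ).principalMinorSum =
      (e + ω) * (σ * k + γ) + e * (α * γ * k + ω) := by
  simp [seirsJacobian, principalMinorSum]
  ring

theorem seirsJacobian_re_neg_of_mem_spectrum (he : 0 < e) (hω : 0 < ω) (hk : 0 < k)
    (hα : 0 ≤ α) (hγ : 0 < γ) (hσ : 0 < σ) (hσk : σ ≤ γ + σ * k) :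
    ∀ μ ∈ spectrum ℂ ((seirsJacobian e ω k α γ σ).map (Complex.ofReal ·)), μ.re < 0 := by
  apply re_neg_of_mem_spectrum_fin_three
  · rw [seirsJacobian_trace]
    nlinarith [mul_pos hσ hk]
  · rw [seirsJacobian_det, neg_mul, neg_lt_zero]
    positivity
  rw [seirsJacobian_trace, seirsJacobian_det, seirsJacobian_principalMinorSum]
  set t := σ * k
  set u := α * γ * k
  have ht : 0 < t := mul_pos hσ hk
  have hu : 0 ≤ u := by positivity
  have hdiff : (e + ω + t + γ) * ((e + ω) * (t + γ) + e * (u + ω))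
        - e * (γ * (u + ω) + σ * (γ * k + ω))
      = e * ω * (γ + t - σ) + ω * (γ + t) ^ 2 + ω ^ 2 * (γ + t)
          + e * (γ ^ 2 + t * u + t * γ + t ^ 2 + ω * u + ω * γ + 2 * (ω * t) + ω ^ 2)
          + e ^ 2 * (u + γ + t + ω) := by
    ring
  have hcross : 0 ≤ e * ω * (γ + t - σ) := mul_nonneg (by positivity) (by linarith)
  have hrest : 0 < ω * (γ + t) ^ 2 + ω ^ 2 * (γ + t)
      + e * (γ ^ 2 + t * u + t * γ + t ^ 2 + ω * u + ω * γ + 2 * (ω * t) + ω ^ 2)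
      + e ^ 2 * (u + γ + t + ω) := by
    positivity
  linarith

end seirsJacobian

theorem div_R0 {β γ δ σ α : ℝ} (hβ : β ≠ 0) (hγ : γ ≠ 0) (hδσ : δ + σ ≠ 0)
    (hαγσ : α * γ + σ ≠ 0) :
    β / R0 β γ δ σ α = γ * ((δ + σ) / (α * γ + σ)) := by
  unfold R0
  field_simp

theorem Mjac_eq_seirsJacobian {β γ δ σ ω α : ℝ} (hβ : β ≠ 0) (hγ : γ ≠ 0) (hδσ : δ + σ ≠ 0)
    (hαγσ : α * γ + σ ≠ 0) :
    Mjac β γ δ σ ω α =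
      seirsJacobian (eps β γ δ σ ω α * ω * (δ + σ)) ω ((δ + σ) / (α * γ + σ)) α γ σ := by
  have h := div_R0 (δ := δ) hβ hγ hδσ hαγσ
  have h01 : -(α * β) / R0 β γ δ σ α = -α * γ * ((δ + σ) / (α * γ + σ)) := by
    rw [neg_div, mul_div_assoc, h]
    ring
  have h02 : -β / R0 β γ δ σ α = -γ * ((δ + σ) / (α * γ + σ)) := by
    rw [neg_div, h]
    ring
  have h11 : -(β * σ) / (γ * R0 β γ δ σ α) = -σ * ((δ + σ) / (α * γ + σ)) := by
    rw [neg_div, mul_comm β, mul_div_mul_comm, h]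
    field_simp
  rw [Mjac, seirsJacobian, h01, h02, h11, h]
  ring_nf

theorem eps_pos {β γ δ σ ω α : ℝ} (hγ : 0 < γ) (hσ : 0 < σ) (hω : 0 < ω) (hδ : 0 ≤ δ)
    (hR0 : 1 < R0 β γ δ σ α) : 0 < eps β γ δ σ ω α := by
  rw [R0, one_lt_div (by positivity)] at hR0
  exact div_pos (sub_pos.2 hR0) (by positivity)

theorem le_add_mul_div {γ δ σ α : ℝ} (hγ : 0 < γ) (hσ : 0 < σ) (hδ : 0 ≤ δ) (hα0 : 0 ≤ α)
    (hα1 : α ≤ 1) : σ ≤ γ + σ * ((δ + σ) / (α * γ + σ)) := by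
  rw [mul_div_assoc', ← sub_le_iff_le_add', le_div_iff₀ (by positivity)]
  nlinarith [mul_nonneg hσ.le hδ, mul_nonneg (mul_nonneg hσ.le hγ.le) (sub_nonneg.2 hα1),
    mul_nonneg hα0 (mul_nonneg hγ.le hγ.le)]

theorem stmt_9_general (β γ δ σ ω α : ℝ)
    (hβ : 0 < β) (hγ : 0 < γ) (hσ : 0 < σ) (hω : 0 < ω)
    (hδ : 0 ≤ δ) (hα0 : 0 ≤ α) (hα1 : α ≤ 1)
    (hR0 : 1 < R0 β γ δ σ α) :
    ∀ μ ∈ spectrum ℂ ((Mjac β γ δ σ ω α).map (Complex.ofReal ·)), μ.re < 0 := by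
  have hδσ : 0 < δ + σ := by positivity
  have hαγσ : 0 < α * γ + σ := by positivity
  rw [Mjac_eq_seirsJacobian hβ.ne' hγ.ne' hδσ.ne' hαγσ.ne']
  exact seirsJacobian_re_neg_of_mem_spectrum
    (by have := eps_pos hγ hσ hω hδ hR0; positivity) hω (by positivity) hα0 hγ hσ
    (le_add_mul_div hγ hσ hδ hα0 hα1)

/-- Stability of the endemic equilibrium: if R₀ > 1 then every complex eigenvalue
of M has strictly negative real part. -/
theorem stmt_9 (β γ δ σ ω α n : ℝ)
    (hβ : 0 < β) (hγ : 0 < γ) (hσ : 0 < σ) (hω : 0 < ω) (hn : 0 < n)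
    (hδ : 0 ≤ δ) (hα0 : 0 ≤ α) (hα1 : α ≤ 1)
    (hR0 : 1 < R0 β γ δ σ α) :
    ∀ μ ∈ spectrum ℂ ((Mjac β γ δ σ ω α).map (Complex.ofReal ·)), μ.re < 0 :=
  stmt_9_general β γ δ σ ω α hβ hγ hσ hω hδ hα0 hα1 hR0
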